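/- For a single concept (A,B) of a subcontext S of a finite context K: φ₁(A,B) = φ₂(A,B) if and only if B' × A' ⊆ I, and this holds if and only if (A' \ B) × (B' \ A) ⊆ I. -/

import Mathlib

variable {G M : Type*} [Fintype G] [Fintype M]

/-- Attribute derivation A' of an object set A w.r.t. incidence I. -/
def fcaExtDeriv (I : Set (G × M)) (A : Set G) : Set M := {m | ∀ g ∈ A, (g, m) ∈ I}

/-- Object derivation B' of an attribute set B w.r.t. incidence I. -/
def intDeriv (I : Set (G × M)) (B : Set M) : Set G := {g | ∀ m ∈ B, (g, m) ∈ I}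

/-- (A,B) is a formal concept of (G,M,I). -/
def IsConcept (I : Set (G × M)) (A : Set G) (B : Set M) : Prop :=
  fcaExtDeriv I A = B ∧ intDeriv I B = A

/-- Derivation of an object set inside the (sub)context (H,N,J). -/
def subExtDeriv (N : Set M) (J : Set (G × M)) (A : Set G) : Set M :=
  {n ∈ N | ∀ g ∈ A, (g, n) ∈ J}

/-- Derivation of an attribute set inside the (sub)context (H,N,J). -/
def subIntDeriv (H : Set G) (J : Set (G × M)) (B : Set M) : Set G :=
  {h ∈ H | ∀ n ∈ B, (h, n) ∈ J}

/-- (A,B) is a formal concept of the context (H,N,J). -/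
def IsSubConcept (H : Set G) (N : Set M) (J : Set (G × M)) (A : Set G) (B : Set M) : Prop :=
  A ⊆ H ∧ B ⊆ N ∧ subExtDeriv N J A = B ∧ subIntDeriv H J B = A

/-- (H,N,J) is a closed-subcontext of (G,M,I). -/
def IsClosedSubcontext (I : Set (G × M)) (H : Set G) (N : Set M) (J : Set (G × M)) : Prop :=
  J ⊆ I ∩ H ×ˢ N ∧ ∀ A B, IsSubConcept H N J A B → IsConcept I A B

/-- Binary join in the concept lattice of (G,M,I). -/
def conceptJoin (I : Set (G × M)) (c d : Set G × Set M) : Set G × Set M :=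
  (intDeriv I (c.2 ∩ d.2), c.2 ∩ d.2)

/-- Binary meet in the concept lattice of (G,M,I). -/
def conceptMeet (I : Set (G × M)) (c d : Set G × Set M) : Set G × Set M :=
  (c.1 ∩ d.1, fcaExtDeriv I (c.1 ∩ d.1))

/-- S is a sublattice of the concept lattice of (G,M,I). -/
def IsConceptSublattice (I : Set (G × M)) (S : Set (Set G × Set M)) : Prop :=
  S.Nonempty ∧ (∀ c ∈ S, IsConcept I c.1 c.2) ∧
    ∀ c ∈ S, ∀ d ∈ S, conceptJoin I c d ∈ S ∧ conceptMeet I c d ∈ S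

/-- Image of the concept set of the subcontext [H,N] under φ₁(A,B)=(A'',A'). -/
def phi1Image (I : Set (G × M)) (H : Set G) (N : Set M) : Set (Set G × Set M) :=
  {c | ∃ A B, IsSubConcept H N (I ∩ H ×ˢ N) A B ∧
      c = (intDeriv I (fcaExtDeriv I A), fcaExtDeriv I A)}

/-- Image of the concept set of the subcontext [H,N] under φ₂(A,B)=(B',B''). -/
def phi2Image (I : Set (G × M)) (H : Set G) (N : Set M) : Set (Set G × Set M) :=
  {c | ∃ A B, IsSubConcept H N (I ∩ H ×ˢ N) A B ∧
      c = (intDeriv I B, fcaExtDeriv I (intDeriv I B))}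

/-- [H,N] is (isomorphic to) a contranominal scale of dimension k in (G,M,I). -/
def IsContranominal (I : Set (G × M)) (k : ℕ) (H : Set G) (N : Set M) : Prop :=
  ∃ f : Fin k → G, ∃ g : Fin k → M, Function.Injective f ∧ Function.Injective g ∧
    H = Set.range f ∧ N = Set.range g ∧ ∀ i j, (f i, g j) ∈ I ↔ i ≠ j

/-- O is a minimal object generator of the concept with extent A. -/
def IsMinObjGen (I : Set (G × M)) (A : Set G) (O : Set G) : Prop :=
  intDeriv I (fcaExtDeriv I O) = A ∧ ∀ P ⊂ O, intDeriv I (fcaExtDeriv I P) ≠ A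

/-- Q is a minimal attribute generator of the concept with intent B. -/
def IsMinAttGen (I : Set (G × M)) (B : Set M) (Q : Set M) : Prop :=
  fcaExtDeriv I (intDeriv I Q) = B ∧ ∀ P ⊂ Q, fcaExtDeriv I (intDeriv I P) ≠ B

/-- Union of all minimal object generators of the atoms of a Boolean suborder
given by an order embedding f of the powerset of Fin k. -/
def genH (I : Set (G × M)) {k : ℕ} (f : Set (Fin k) → Set G × Set M) : Set G :=
  {g | ∃ i : Fin k, ∃ O : Set G, IsMinObjGen I (f {i}).1 O ∧ g ∈ O}

/-- Union of all minimal attribute generators of the coatoms of a Boolean suborder. -/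
def genN (I : Set (G × M)) {k : ℕ} (f : Set (Fin k) → Set G × Set M) : Set M :=
  {m | ∃ i : Fin k, ∃ Q : Set M, IsMinAttGen I (f {i}ᶜ).2 Q ∧ m ∈ Q}

/-! The derivations form an antitone Galois connection in which `X ×ˢ Y ⊆ I` means both
`X ⊆ Y'` and `Y ⊆ X'`. As `B ⊆ A'` gives `A'' ⊆ B'` and `A ⊆ B'` gives `B'' ⊆ A'`, both
equalities `A'' = B'` and `A' = B''` reduce to `B' ×ˢ A' ⊆ I`. Of the four blocks of
`B' ×ˢ A'` split along `A ⊆ B'` and `B ⊆ A'`, all but `(B' \ A) ×ˢ (A' \ B)` lie in `I`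
by the definition of the derivations. -/

section Derivation

variable {α β : Type*} (I : Set (α × β))

theorem prod_subset_iff_subset_intDeriv {X : Set α} {Y : Set β} :
    X ×ˢ Y ⊆ I ↔ X ⊆ intDeriv I Y :=
  ⟨fun h _ hx _ hy => h ⟨hx, hy⟩, fun h p hp => h hp.1 p.2 hp.2⟩

theorem prod_subset_iff_subset_fcaExtDeriv {X : Set α} {Y : Set β} :
    X ×ˢ Y ⊆ I ↔ Y ⊆ fcaExtDeriv I X :=
  ⟨fun h _ hy _ hx => h ⟨hx, hy⟩, fun h p hp => h hp.2 p.1 hp.1⟩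

theorem subset_fcaExtDeriv_iff_subset_intDeriv {X : Set α} {Y : Set β} :
    Y ⊆ fcaExtDeriv I X ↔ X ⊆ intDeriv I Y :=
  (prod_subset_iff_subset_fcaExtDeriv I).symm.trans (prod_subset_iff_subset_intDeriv I)

theorem fcaExtDeriv_anti {X₁ X₂ : Set α} (h : X₁ ⊆ X₂) :
    fcaExtDeriv I X₂ ⊆ fcaExtDeriv I X₁ :=
  fun _ hm g hg => hm g (h hg)

theorem intDeriv_anti {Y₁ Y₂ : Set β} (h : Y₁ ⊆ Y₂) : intDeriv I Y₂ ⊆ intDeriv I Y₁ :=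
  fun _ hg m hm => hg m (h hm)

theorem IsSubConcept.subset_fcaExtDeriv {H : Set α} {N : Set β} {A : Set α} {B : Set β}
    (h : IsSubConcept H N (I ∩ H ×ˢ N) A B) : B ⊆ fcaExtDeriv I A := by
  obtain ⟨-, -, hB, -⟩ := h
  rw [← hB]
  exact fun _ hm g hg => (hm.2 g hg).1

theorem prod_eq_prod_iff_intDeriv_prod_fcaExtDeriv_subset {A : Set α} {B : Set β}
    (hBA : B ⊆ fcaExtDeriv I A) :
    ((intDeriv I (fcaExtDeriv I A), fcaExtDeriv I A) : Set α × Set β) =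
        (intDeriv I B, fcaExtDeriv I (intDeriv I B)) ↔
      intDeriv I B ×ˢ fcaExtDeriv I A ⊆ I := by
  rw [Prod.ext_iff]
  constructor
  · rintro ⟨hext, -⟩
    dsimp only at hext
    rw [← hext, prod_subset_iff_subset_intDeriv]
  · intro hsub
    have hAB : A ⊆ intDeriv I B := (subset_fcaExtDeriv_iff_subset_intDeriv I).1 hBA
    exact ⟨(intDeriv_anti I hBA).antisymm ((prod_subset_iff_subset_intDeriv I).1 hsub),
      ((prod_subset_iff_subset_fcaExtDeriv I).1 hsub).antisymm (fcaExtDeriv_anti I hAB)⟩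

theorem intDeriv_prod_fcaExtDeriv_subset_iff (A : Set α) (B : Set β) :
    intDeriv I B ×ˢ fcaExtDeriv I A ⊆ I ↔
      (intDeriv I B \ A) ×ˢ (fcaExtDeriv I A \ B) ⊆ I := by
  refine ⟨fun h p hp => h ⟨hp.1.1, hp.2.1⟩, fun h p ⟨hg, hm⟩ => ?_⟩
  by_cases hgA : p.1 ∈ A
  · exact hm p.1 hgA
  by_cases hmB : p.2 ∈ B
  · exact hg p.2 hmB
  exact h ⟨⟨hg, hgA⟩, hm, hmB⟩

end Derivation

theorem stmt13 (I : Set (G × M)) (H : Set G) (N : Set M) (A : Set G) (B : Set M)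
    (h : IsSubConcept H N (I ∩ H ×ˢ N) A B) :
    (((intDeriv I (fcaExtDeriv I A), fcaExtDeriv I A) : Set G × Set M) =
        (intDeriv I B, fcaExtDeriv I (intDeriv I B)) ↔
      intDeriv I B ×ˢ fcaExtDeriv I A ⊆ I) ∧
    (intDeriv I B ×ˢ fcaExtDeriv I A ⊆ I ↔ (intDeriv I B \ A) ×ˢ (fcaExtDeriv I A \ B) ⊆ I) :=
  ⟨prod_eq_prod_iff_intDeriv_prod_fcaExtDeriv_subset I h.subset_fcaExtDeriv,
    intDeriv_prod_fcaExtDeriv_subset_iff I A B⟩
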